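/- Let $m \ge 2$ be even, $z > 0$ real, and $z_1, \ldots, z_n$ complex numbers closed under conjugation with $\operatorname{Re} z_j < 0$ for all $j$. Let $\omega_k = e^{(2k-1)\pi i/m}$ and $q_{j,k} = \frac{\omega_k z - z_j}{\omega_0 z - \overline{z_j}}$. Then $\prod_{j=1}^n |q_{j,k}| \le 1$ for all $0 \le k < m$, with equality if and only if $k = 0$ or $k = 1$ (assuming $m > 2$ and $n \ge 1$). -/

import Mathlib

/-- The `m`-th roots of `-1`: `ω_k = e^{(2k-1)πi/m}`. -/
noncomputable def omegaRoot (m k : ℕ) : ℂ :=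
  Complex.exp ((2 * (k : ℂ) - 1) * Real.pi * Complex.I / m)

/-! Conjugating the denominator turns `ω₀ z - conj z_j` into the conjugate of `ω₁ z - z_j`, so the
product is `P(ω_k z) / P(ω₁ z)` with `P(w) = ∏ |w - z_j|`. Since the `z_j` are closed under
conjugation, `P(w)² = ∏ |w - z_j| |w - conj z_j|`, and on a circle `|w| = r` each factor
`|w - a|² |w - conj a|²` is a quadratic polynomial in `Re w` which increases from `t` to `s`
whenever `t < s`, `0 ≤ s + t` and `Re a < 0`. Now `ω₀` and `ω₁` share the largest real part `cos (π/m)`, and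
as `m` is even every other `ω_k` has real part in `[-cos (π/m), cos (π/m))`. -/

open ComplexConjugate Finset Real

lemma Finset.prod_lt_prod_of_nonempty_of_nonneg {ι : Type*} {s : Finset ι} {f g : ι → ℝ}
    (hf : ∀ i ∈ s, 0 ≤ f i) (hfg : ∀ i ∈ s, f i < g i) (hs : s.Nonempty) :
    ∏ i ∈ s, f i < ∏ i ∈ s, g i := by
  induction hs using Finset.Nonempty.cons_induction with
  | singleton a => simpa using hfg a (mem_singleton_self a)
  | cons a s ha hs ih =>
    simp only [prod_cons, forall_mem_cons] at hf hfg ⊢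
    exact mul_lt_mul'' hfg.1 (ih hf.2 hfg.2) hf.1 (prod_nonneg hf.2)

lemma Fin.prod_comp_eq_of_map_ofFn_eq {α M : Type*} [CommMonoid M] {n : ℕ} {zs : Fin n → α}
    {g : α → α} (hg : Multiset.map g (List.ofFn zs : Multiset α) = List.ofFn zs) (f : α → M) :
    ∏ j, f (g (zs j)) = ∏ j, f (zs j) := by
  simpa [Multiset.map_map, Function.comp_def, List.map_ofFn, List.prod_ofFn]
    using congrArg (fun M : Multiset α => (M.map f).prod) hg

namespace Complex

lemma sq_norm_sub_mul_norm_sub_conj (w a : ℂ) :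
    (‖w - a‖ * ‖w - conj a‖) ^ 2
      = (‖w‖ ^ 2 + ‖a‖ ^ 2 - 2 * w.re * a.re) ^ 2 - 4 * (w.im * a.im) ^ 2 := by
  simp only [mul_pow, Complex.sq_norm, normSq_apply, sub_re, sub_im, conj_re, conj_im]
  ring

lemma norm_sub_mul_norm_sub_conj_eq {v w : ℂ} (hvw : ‖v‖ = ‖w‖) (hre : v.re = w.re) (a : ℂ) :
    ‖v - a‖ * ‖v - conj a‖ = ‖w - a‖ * ‖w - conj a‖ := by
  have him : v.im ^ 2 = w.im ^ 2 := by rw [← sq_norm_sub_sq_re, ← sq_norm_sub_sq_re, hvw, hre]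
  rw [← pow_left_inj₀ (by positivity) (by positivity) two_ne_zero,
    sq_norm_sub_mul_norm_sub_conj, sq_norm_sub_mul_norm_sub_conj, hvw, hre, mul_pow, mul_pow, him]

lemma norm_sub_mul_norm_sub_conj_lt {v w a : ℂ} (hvw : ‖v‖ = ‖w‖) (hlt : v.re < w.re)
    (hsum : 0 ≤ v.re + w.re) (ha : a.re < 0) :
    ‖v - a‖ * ‖v - conj a‖ < ‖w - a‖ * ‖w - conj a‖ := by
  rw [← pow_lt_pow_iff_left₀ (by positivity) (by positivity) two_ne_zero,
    sq_norm_sub_mul_norm_sub_conj, sq_norm_sub_mul_norm_sub_conj, hvw, mul_pow, mul_pow,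
    ← sq_norm_sub_sq_re v, ← sq_norm_sub_sq_re w, ← sq_norm_sub_sq_re a, hvw]
  have hA : 0 < ‖w‖ ^ 2 + ‖a‖ ^ 2 := by
    have : 0 < ‖a‖ := norm_pos_iff.2 fun h => by simp [h] at ha
    positivity
  have hfac : 0 < (w.re - v.re) * (‖a‖ ^ 2 * (v.re + w.re) - (‖w‖ ^ 2 + ‖a‖ ^ 2) * a.re) :=
    mul_pos (by linarith)
      (by nlinarith [mul_nonneg (sq_nonneg ‖a‖) hsum, mul_pos hA (neg_pos.2 ha)])
  linear_combination 4 * hfac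

end Complex

section ConjClosed

variable {n : ℕ} {zs : Fin n → ℂ}

lemma sq_prod_norm_sub_of_map_conj_eq
    (hconj : Multiset.map (starRingEnd ℂ) (List.ofFn zs : Multiset ℂ) = List.ofFn zs) (w : ℂ) :
    (∏ j, ‖w - zs j‖) ^ 2 = ∏ j, ‖w - zs j‖ * ‖w - conj (zs j)‖ := by
  rw [sq, prod_mul_distrib, Fin.prod_comp_eq_of_map_ofFn_eq hconj (fun a => ‖w - a‖)]

lemma prod_norm_sub_eq_of_re_eq
    (hconj : Multiset.map (starRingEnd ℂ) (List.ofFn zs : Multiset ℂ) = List.ofFn zs)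
    {v w : ℂ} (hvw : ‖v‖ = ‖w‖) (hre : v.re = w.re) :
    ∏ j, ‖v - zs j‖ = ∏ j, ‖w - zs j‖ := by
  rw [← pow_left_inj₀ (by positivity) (by positivity) two_ne_zero,
    sq_prod_norm_sub_of_map_conj_eq hconj, sq_prod_norm_sub_of_map_conj_eq hconj]
  exact prod_congr rfl fun j _ => Complex.norm_sub_mul_norm_sub_conj_eq hvw hre _

lemma prod_norm_sub_le_of_re_lt
    (hconj : Multiset.map (starRingEnd ℂ) (List.ofFn zs : Multiset ℂ) = List.ofFn zs)
    (hzs : ∀ j, (zs j).re < 0) {v w : ℂ} (hvw : ‖v‖ = ‖w‖) (hlt : v.re < w.re)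
    (hsum : 0 ≤ v.re + w.re) :
    ∏ j, ‖v - zs j‖ ≤ ∏ j, ‖w - zs j‖ := by
  rw [← pow_le_pow_iff_left₀ (by positivity) (by positivity) two_ne_zero,
    sq_prod_norm_sub_of_map_conj_eq hconj, sq_prod_norm_sub_of_map_conj_eq hconj]
  exact prod_le_prod (fun j _ => by positivity)
    fun j _ => (Complex.norm_sub_mul_norm_sub_conj_lt hvw hlt hsum (hzs j)).le

lemma prod_norm_sub_lt_of_re_lt [Nonempty (Fin n)]
    (hconj : Multiset.map (starRingEnd ℂ) (List.ofFn zs : Multiset ℂ) = List.ofFn zs)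
    (hzs : ∀ j, (zs j).re < 0) {v w : ℂ} (hvw : ‖v‖ = ‖w‖) (hlt : v.re < w.re)
    (hsum : 0 ≤ v.re + w.re) :
    ∏ j, ‖v - zs j‖ < ∏ j, ‖w - zs j‖ := by
  rw [← pow_lt_pow_iff_left₀ (by positivity) (by positivity) two_ne_zero,
    sq_prod_norm_sub_of_map_conj_eq hconj, sq_prod_norm_sub_of_map_conj_eq hconj]
  exact prod_lt_prod_of_nonempty_of_nonneg (fun j _ => by positivity)
    (fun j _ => Complex.norm_sub_mul_norm_sub_conj_lt hvw hlt hsum (hzs j)) univ_nonempty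

end ConjClosed

lemma omegaRoot_eq_exp (m k : ℕ) :
    omegaRoot m k = Complex.exp (↑((2 * k - 1) * π / m) * Complex.I) := by
  rw [omegaRoot]; push_cast; ring_nf

lemma norm_omegaRoot (m k : ℕ) : ‖omegaRoot m k‖ = 1 := by
  rw [omegaRoot_eq_exp, Complex.norm_exp_ofReal_mul_I]

lemma re_omegaRoot (m k : ℕ) : (omegaRoot m k).re = cos ((2 * k - 1) * π / m) := by
  rw [omegaRoot_eq_exp, Complex.exp_ofReal_mul_I_re]

lemma conj_omegaRoot_zero (m : ℕ) : conj (omegaRoot m 0) = omegaRoot m 1 := by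
  rw [omegaRoot_eq_exp, omegaRoot_eq_exp, ← Complex.exp_conj]
  congr 1
  simp only [map_mul, Complex.conj_ofReal, Complex.conj_I]
  push_cast
  ring

lemma cos_lt_cos_and_nonneg_cos_add_cos {p θ : ℝ} (hp : 0 < p) (h3p : 3 * p ≤ θ)
    (hθ : θ ≤ π - p) : cos θ < cos p ∧ 0 ≤ cos p + cos θ := by
  refine ⟨cos_lt_cos_of_nonneg_of_le_pi hp.le (by linarith) (by linarith), ?_⟩
  have := cos_le_cos_of_nonneg_of_le_pi (x := θ) (y := π - p) (by linarith) (by linarith) hθ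
  rw [cos_pi_sub] at this
  linarith

lemma re_omegaRoot_lt_and_nonneg {m k : ℕ} (hm : Even m) (hk : 2 ≤ k) (hkm : k < m) :
    (omegaRoot m k).re < (omegaRoot m 1).re ∧ 0 ≤ (omegaRoot m 1).re + (omegaRoot m k).re := by
  have hm0 : (0 : ℝ) < m := by exact_mod_cast (by omega : 0 < m)
  rw [re_omegaRoot, re_omegaRoot, Nat.cast_one, show (2 * 1 - 1) * π / m = π / m by ring]
  obtain ⟨j, hj, hjm, hcos⟩ : ∃ j : ℕ, 2 ≤ j ∧ 2 * j ≤ m ∧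
      cos ((2 * k - 1) * π / m) = cos ((2 * j - 1) * π / m) := by
    -- `k ↦ m + 1 - k` maps `ω_k` to its conjugate
    by_cases h : 2 * k ≤ m
    · exact ⟨k, hk, h, rfl⟩
    · refine ⟨m + 1 - k, by omega, by obtain ⟨r, hr⟩ := hm; omega, ?_⟩
      rw [← cos_two_pi_sub ((2 * ((m + 1 - k : ℕ) : ℝ) - 1) * π / m)]
      congr 1
      push_cast [show k ≤ m + 1 by omega]
      field_simp
      ring
  have hj' : (2 : ℝ) ≤ j := by exact_mod_cast hj
  have hjm' : (2 * j : ℝ) ≤ m := by exact_mod_cast hjm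
  rw [hcos]
  apply cos_lt_cos_and_nonneg_cos_add_cos (by positivity)
  · rw [← mul_div_assoc]
    gcongr
    linarith
  · rw [div_le_iff₀ hm0, sub_mul (π), div_mul_cancel₀ _ hm0.ne']
    nlinarith [pi_pos]

lemma norm_omegaRoot_zero_mul_sub_conj (m : ℕ) (z : ℝ) (a : ℂ) :
    ‖omegaRoot m 0 * z - conj a‖ = ‖omegaRoot m 1 * z - a‖ := by
  rw [← conj_omegaRoot_zero, ← Complex.norm_conj]
  simp

lemma prod_norm_omegaRoot_one_mul_sub_pos {m n : ℕ} (hm : 2 ≤ m) {z : ℝ} (hz : 0 ≤ z)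
    {zs : Fin n → ℂ} (hzs : ∀ j, (zs j).re < 0) : 0 < ∏ j, ‖omegaRoot m 1 * z - zs j‖ := by
  have hcos : 0 ≤ cos (π / m) := by
    exact cos_nonneg_of_mem_Icc ⟨by linarith [pi_pos, div_nonneg pi_pos.le (Nat.cast_nonneg m)],
      div_le_div_of_nonneg_left pi_pos.le two_pos (by exact_mod_cast hm)⟩
  refine prod_pos fun j _ => norm_pos_iff.2 fun h => ?_
  have := congrArg Complex.re h
  norm_num [re_omegaRoot] at this
  nlinarith [hzs j, mul_nonneg hcos hz]

theorem stmt_9_general (m : ℕ) (hme : Even m) (z : ℝ) (hz : 0 < z) (n : ℕ)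
    (zs : Fin n → ℂ)
    (hconj : Multiset.map (starRingEnd ℂ) (List.ofFn zs : Multiset ℂ) = (List.ofFn zs : Multiset ℂ))
    (hre : ∀ j, (zs j).re < 0) :
    (∀ k < m, ∏ j, ‖
        ((omegaRoot m k * z - zs j) / (omegaRoot m 0 * z - (starRingEnd ℂ) (zs j)))‖ ≤ 1) ∧
    (2 < m → 1 ≤ n → ∀ k < m,
      ((∏ j, ‖
          ((omegaRoot m k * z - zs j) / (omegaRoot m 0 * z - (starRingEnd ℂ) (zs j)))‖) = 1
        ↔ k = 0 ∨ k = 1)) := by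
  set F : ℂ → ℝ := fun w => ∏ j, ‖w - zs j‖ with hF
  have hratio : ∀ k, ∏ j, ‖(omegaRoot m k * z - zs j) / (omegaRoot m 0 * z - conj (zs j))‖
      = F (omegaRoot m k * z) / F (omegaRoot m 1 * z) := fun k => by
    simp only [norm_div, prod_div_distrib, norm_omegaRoot_zero_mul_sub_conj, hF]
  have hnorm : ∀ k, ‖omegaRoot m k * z‖ = ‖omegaRoot m 1 * z‖ := by simp [norm_omegaRoot]
  have hF0 : F (omegaRoot m 0 * z) = F (omegaRoot m 1 * z) :=
    prod_norm_sub_eq_of_re_eq hconj (hnorm 0) (by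
      rw [Complex.re_mul_ofReal, Complex.re_mul_ofReal, ← conj_omegaRoot_zero, Complex.conj_re])
  have hre_lt : ∀ k, 2 ≤ k → k < m → (omegaRoot m k * z).re < (omegaRoot m 1 * z).re ∧
      0 ≤ (omegaRoot m k * z).re + (omegaRoot m 1 * z).re := fun k hk hkm => by
    obtain ⟨hlt, hsum⟩ := re_omegaRoot_lt_and_nonneg hme hk hkm
    simp only [Complex.re_mul_ofReal]
    exact ⟨by gcongr, by nlinarith⟩
  refine ⟨fun k hk => ?_, fun hm hn k hk => ?_⟩
  · rw [hratio]
    obtain rfl | rfl | hk2 : k = 0 ∨ k = 1 ∨ 2 ≤ k := by omega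
    · rw [hF0]; exact div_self_le_one _
    · exact div_self_le_one _
    · obtain ⟨hlt, hsum⟩ := hre_lt k hk2 hk
      exact div_le_one_of_le₀ (prod_norm_sub_le_of_re_lt hconj hre (hnorm k) hlt hsum)
        (prod_nonneg fun _ _ => norm_nonneg _)
  · have : Nonempty (Fin n) := ⟨⟨0, hn⟩⟩
    rw [hratio, div_eq_one_iff_eq (prod_norm_omegaRoot_one_mul_sub_pos hm.le hz.le hre).ne']
    refine ⟨fun heq => ?_, by rintro (rfl | rfl); exacts [hF0, rfl]⟩
    by_contra hk01
    obtain ⟨hlt, hsum⟩ := hre_lt k (by omega) hk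
    exact (prod_norm_sub_lt_of_re_lt hconj hre (hnorm k) hlt hsum).ne heq

/-- For even `m ≥ 2`, `z > 0`, and `z_1, …, z_n` closed under conjugation with `Re z_j < 0`,
setting `q_{j,k} = (ω_k z - z_j)/(ω_0 z - conj z_j)`, one has `∏_j |q_{j,k}| ≤ 1` for all
`0 ≤ k < m`, with equality iff `k = 0` or `k = 1` (assuming `m > 2` and `n ≥ 1`). -/
theorem stmt_9 (m : ℕ) (hm : 2 ≤ m) (hme : Even m) (z : ℝ) (hz : 0 < z) (n : ℕ)
    (zs : Fin n → ℂ)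
    (hconj : Multiset.map (starRingEnd ℂ) (List.ofFn zs : Multiset ℂ) = (List.ofFn zs : Multiset ℂ))
    (hre : ∀ j, (zs j).re < 0) :
    (∀ k < m, ∏ j, ‖
        ((omegaRoot m k * z - zs j) / (omegaRoot m 0 * z - (starRingEnd ℂ) (zs j)))‖ ≤ 1) ∧
    (2 < m → 1 ≤ n → ∀ k < m,
      ((∏ j, ‖
          ((omegaRoot m k * z - zs j) / (omegaRoot m 0 * z - (starRingEnd ℂ) (zs j)))‖) = 1
        ↔ k = 0 ∨ k = 1)) :=
  stmt_9_general m hme z hz n zs hconj hre
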